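/- Let f ∈ L¹(ℝ³×ℝ³) be nonnegative and axially symmetric (f(Ax,Av) = f(x,v) for every rotation A about the x₃-axis) with total mass ∫∫ f dv dx = M. Suppose that for some a = (ā, z) ∈ ℝ²×ℝ, R > 0 and δ > 0 one has ∫_{a+B_R} ∫_{ℝ³} f(x,v) dv dx ≥ δ. Let N := ⌊M/δ⌋ + 1 (so that N δ > M). Then the horizontal component of the shift is bounded: |ā| sin(π/N) ≤ R. (Indeed, if |ā| sin(π/N) > R, then the N balls A_k a + B_R, where A_k is the rotation about the x₃-axis by angle 2πk/N, k = 1,…,N, are pairwise disjoint, and by axial symmetry each carries mass at least δ, contradicting the total mass M.) -/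

import Mathlib

open MeasureTheory Real Filter Topology

noncomputable section

abbrev E3 := EuclideanSpace ℝ (Fin 3)

def e3 (a b c : ℝ) : E3 := (WithLp.equiv 2 (Fin 3 → ℝ)).symm ![a, b, c]

/-- third component of the angular momentum, P(x,v) = x₁v₂ − x₂v₁ -/
def angmom (z : E3 × E3) : ℝ := z.1 0 * z.2 1 - z.1 1 * z.2 0

/-- induced spatial density ρ_f -/
def rho (f : E3 × E3 → ℝ) (x : E3) : ℝ := ∫ v : E3, f (x, v)

/-- kinetic energy -/
def Ekin (f : E3 × E3 → ℝ) : ℝ := (1/2) * ∫ z : E3 × E3, ‖z.2‖^2 * f z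

/-- potential energy -/
def Epot (f : E3 × E3 → ℝ) : ℝ :=
  -(1/2) * ∫ x : E3, ∫ y : E3, rho f x * rho f y / ‖x - y‖

/-- Casimir functional 𝒞 -/
def Casimir (Q : ℝ → ℝ → ℝ) (f : E3 × E3 → ℝ) : ℝ :=
  ∫ z : E3 × E3, Q (f z) (angmom z)

/-- energy-Casimir functional ℋ_C -/
def HC (Q : ℝ → ℝ → ℝ) (f : E3 × E3 → ℝ) : ℝ := Ekin f + Epot f + Casimir Q f

/-- rotation about the x₃-axis by angle θ -/
def rotZ (θ : ℝ) (x : E3) : E3 :=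
  e3 (Real.cos θ * x 0 - Real.sin θ * x 1) (Real.sin θ * x 0 + Real.cos θ * x 1) (x 2)

/-- axial symmetry: invariance under all rotations about the x₃-axis -/
def AxiSym (f : E3 × E3 → ℝ) : Prop :=
  ∀ (θ : ℝ) (z : E3 × E3), f (rotZ θ z.1, rotZ θ z.2) = f z

/-- membership in the constraint set ℱ_M -/
def MemFM (Q : ℝ → ℝ → ℝ) (M : ℝ) (f : E3 × E3 → ℝ) : Prop :=
  Integrable f ∧ (∀ z, 0 ≤ f z) ∧ (∫ z : E3 × E3, f z) = M ∧
    Integrable (fun z : E3 × E3 => ‖z.2‖^2 * f z) ∧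
    Integrable (fun z : E3 × E3 => Q (f z) (angmom z))

/-- membership in the axially symmetric constraint set ℱ_M^S -/
def MemFMS (Q : ℝ → ℝ → ℝ) (M : ℝ) (f : E3 × E3 → ℝ) : Prop :=
  MemFM Q M f ∧ AxiSym f

/-- h_M = inf of ℋ_C over ℱ_M -/
def hInf (Q : ℝ → ℝ → ℝ) (M : ℝ) : ℝ := sInf (HC Q '' {f | MemFM Q M f})

/-- h_M^S = inf of ℋ_C over ℱ_M^S -/
def hInfS (Q : ℝ → ℝ → ℝ) (M : ℝ) : ℝ := sInf (HC Q '' {f | MemFMS Q M f})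

/-- induced gravitational potential U₀ of a state f₀ -/
def U0 (f0 : E3 × E3 → ℝ) (x : E3) : ℝ := -∫ y : E3, rho f0 y / ‖x - y‖

/-- particle energy E(x,v) = ½|v|² + U₀(x) -/
def Eng (f0 : E3 × E3 → ℝ) (z : E3 × E3) : ℝ := (1/2) * ‖z.2‖^2 + U0 f0 z.1

/-- φ(s,P) = (∂_f Q(·,P))⁻¹(s) for s ≥ 0, and 0 for s < 0 -/
def phi (Qf : ℝ → ℝ → ℝ) (s P : ℝ) : ℝ :=
  if 0 ≤ s then Function.invFunOn (fun t => Qf t P) (Set.Ici 0) s else 0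

/-! If `|ā| sin(π/N) > R`, the closed balls of radius `R` around the rotations of `a` by the
angles `2πk/N`, `k < N`, are pairwise disjoint: two of these centres are at distance
`2|ā| |sin(π(j-k)/N)| ≥ 2|ā| sin(π/N)`. Axial symmetry makes the spatial density rotation
invariant, so each ball carries mass at least `δ`, and together they carry `Nδ > M`. -/

open Function

theorem card_mul_le_integral_of_pairwise_disjoint {X ι : Type*} [MeasurableSpace X]
    {μ : Measure X} {g : X → ℝ} (hg : Integrable g μ) (hg0 : 0 ≤ᵐ[μ] g) {s : Finset ι}
    {t : ι → Set X} (ht : ∀ i ∈ s, MeasurableSet (t i))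
    (hd : Set.Pairwise ↑s (Disjoint on t)) {δ : ℝ}
    (hδ : ∀ i ∈ s, δ ≤ ∫ x in t i, g x ∂μ) :
    s.card * δ ≤ ∫ x, g x ∂μ :=
  calc s.card * δ = ∑ i ∈ s, δ := by simp
    _ ≤ ∑ i ∈ s, ∫ x in t i, g x ∂μ := Finset.sum_le_sum hδ
    _ = ∫ x in ⋃ i ∈ s, t i, g x ∂μ :=
      (integral_biUnion_finset s ht hd fun i _ => hg.integrableOn).symm
    _ ≤ ∫ x, g x ∂μ := setIntegral_le_integral hg hg0

theorem LinearIsometryEquiv.setIntegral_closedBall_apply {E F : Type*} [NormedAddCommGroup E]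
    [InnerProductSpace ℝ E] [FiniteDimensional ℝ E] [MeasurableSpace E] [BorelSpace E]
    [NormedAddCommGroup F] [NormedSpace ℝ F] (e : E ≃ₗᵢ[ℝ] E) {g : E → F}
    (hg : ∀ x, g (e x) = g x) (a : E) (R : ℝ) :
    ∫ x in Metric.closedBall (e a) R, g x = ∫ x in Metric.closedBall a R, g x := by
  rw [← e.image_closedBall,
    e.measurePreserving.setIntegral_image_emb e.toMeasurableEquiv.measurableEmbedding]
  simp only [hg]

lemma sin_pi_div_le_sin_pi_mul_div {m N : ℕ} (hm : 1 ≤ m) (hmN : m < N) :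
    sin (π / N) ≤ sin (π * m / N) := by
  have hN : (0 : ℝ) < N := by exact_mod_cast (Nat.zero_lt_one.trans_le hm).trans hmN
  have h1 : (1 : ℝ) ≤ m := by exact_mod_cast hm
  have h2 : ((m : ℝ) + 1) * (π / N) ≤ π := by
    calc ((m : ℝ) + 1) * (π / N) ≤ N * (π / N) := by gcongr; exact_mod_cast hmN
      _ = π := mul_div_cancel₀ π hN.ne'
  have hθ : 0 < π / N := by positivity
  rw [show π * m / N = m * (π / N) by ring]
  rcases le_total (m * (π / N)) (π / 2) with h | h
  · exact sin_le_sin_of_le_of_le_pi_div_two (by linarith [pi_pos]) h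
      (le_mul_of_one_le_left hθ.le h1)
  · rw [← sin_pi_sub (m * (π / N))]
    exact sin_le_sin_of_le_of_le_pi_div_two (by linarith) (by linarith) (by linarith)

lemma rotZ_apply_zero (θ : ℝ) (x : E3) : rotZ θ x 0 = cos θ * x 0 - sin θ * x 1 := rfl
lemma rotZ_apply_one (θ : ℝ) (x : E3) : rotZ θ x 1 = sin θ * x 0 + cos θ * x 1 := rfl
lemma rotZ_apply_two (θ : ℝ) (x : E3) : rotZ θ x 2 = x 2 := rfl

lemma E3.ext {x y : E3} (h0 : x 0 = y 0) (h1 : x 1 = y 1) (h2 : x 2 = y 2) : x = y := by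
  ext i
  fin_cases i <;> assumption

lemma E3.norm_eq (x : E3) : ‖x‖ = √(x 0 ^ 2 + x 1 ^ 2 + x 2 ^ 2) := by
  simp [EuclideanSpace.norm_eq, Fin.sum_univ_three, sq_abs]

lemma rotZ_neg_rotZ (θ : ℝ) (x : E3) : rotZ (-θ) (rotZ θ x) = x := by
  refine E3.ext ?_ ?_ rfl <;>
    simp only [rotZ_apply_zero, rotZ_apply_one, cos_neg, sin_neg]
  · linear_combination x 0 * sin_sq_add_cos_sq θ
  · linear_combination x 1 * sin_sq_add_cos_sq θ

def rotZEquiv (θ : ℝ) : E3 ≃ₗᵢ[ℝ] E3 where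
  toFun := rotZ θ
  invFun := rotZ (-θ)
  map_add' x y := by
    refine E3.ext ?_ ?_ rfl <;>
      simp only [rotZ_apply_zero, rotZ_apply_one, PiLp.add_apply] <;> ring
  map_smul' c x := by
    refine E3.ext ?_ ?_ rfl <;>
      simp only [rotZ_apply_zero, rotZ_apply_one, PiLp.smul_apply, smul_eq_mul,
        RingHom.id_apply] <;> ring
  left_inv := rotZ_neg_rotZ θ
  right_inv x := by simpa using rotZ_neg_rotZ (-θ) x
  norm_map' x := by
    change ‖rotZ θ x‖ = ‖x‖
    rw [E3.norm_eq, E3.norm_eq, rotZ_apply_zero, rotZ_apply_one, rotZ_apply_two]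
    congr 1
    linear_combination (x 0 ^ 2 + x 1 ^ 2) * sin_sq_add_cos_sq θ

@[simp] lemma coe_rotZEquiv (θ : ℝ) : ⇑(rotZEquiv θ) = rotZ θ := rfl

lemma dist_rotZ_rotZ (α β : ℝ) (x : E3) :
    dist (rotZ α x) (rotZ β x) = 2 * √(x 0 ^ 2 + x 1 ^ 2) * |sin ((α - β) / 2)| := by
  have hcos : cos (α - β) = 1 - 2 * sin ((α - β) / 2) ^ 2 := by
    have := cos_sq ((α - β) / 2)
    rw [show 2 * ((α - β) / 2) = α - β by ring] at this
    linarith [sin_sq_add_cos_sq ((α - β) / 2)]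
  have hsq : dist (rotZ α x) (rotZ β x) ^ 2
      = (2 * √(x 0 ^ 2 + x 1 ^ 2) * |sin ((α - β) / 2)|) ^ 2 := by
    rw [mul_pow, mul_pow, sq_abs, sq_sqrt (by positivity), dist_eq_norm, E3.norm_eq,
      sq_sqrt (by positivity)]
    simp only [PiLp.sub_apply, rotZ_apply_zero, rotZ_apply_one, rotZ_apply_two]
    rw [cos_sub] at hcos
    linear_combination
      (x 0 ^ 2 + x 1 ^ 2) * (sin_sq_add_cos_sq α + sin_sq_add_cos_sq β - 2 * hcos)
  exact (sq_eq_sq₀ dist_nonneg (by positivity)).1 hsq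

lemma rho_rotZ {f : E3 × E3 → ℝ} (hsym : AxiSym f) (θ : ℝ) (x : E3) :
    rho f (rotZ θ x) = rho f x := by
  rw [rho, ← integral_comp (rotZEquiv θ)]
  exact integral_congr_ae (ae_of_all _ fun v => hsym θ (x, v))

lemma pairwise_disjoint_closedBall_rotZ {a : E3} {R : ℝ} {N : ℕ}
    (h : R < √(a 0 ^ 2 + a 1 ^ 2) * sin (π / N)) :
    Set.Pairwise ↑(Finset.range N)
      (Disjoint on fun k : ℕ => Metric.closedBall (rotZ (2 * π * k / N) a) R) := by
  have hsep : ∀ k j : ℕ, k < j → j < N →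
      R + R < dist (rotZ (2 * π * j / N) a) (rotZ (2 * π * k / N) a) := by
    intro k j hkj hjN
    obtain ⟨m, rfl⟩ := Nat.exists_eq_add_of_lt hkj
    have hsin := sin_pi_div_le_sin_pi_mul_div (m := m + 1) (N := N) (by omega) (by omega)
    have hmono := mul_le_mul_of_nonneg_left (hsin.trans (le_abs_self _))
      (sqrt_nonneg (a 0 ^ 2 + a 1 ^ 2))
    rw [dist_rotZ_rotZ, show (2 * π * ((k + m + 1 : ℕ) : ℝ) / N - 2 * π * k / N) / 2
      = π * ((m + 1 : ℕ) : ℝ) / N by push_cast; ring]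
    linarith
  intro j hj k hk hjk
  simp only [Finset.coe_range, Set.mem_Iio] at hj hk
  rcases hjk.lt_or_gt with hlt | hlt
  · exact Metric.closedBall_disjoint_closedBall (by rw [dist_comm]; exact hsep j k hlt hk)
  · exact Metric.closedBall_disjoint_closedBall (hsep k j hlt hj)

theorem stmt10_general (f : E3 × E3 → ℝ) (M δ R a1 a2 z : ℝ)
    (hf : Integrable f) (hnn : ∀ w, 0 ≤ f w) (hsym : AxiSym f)
    (hmass : (∫ w : E3 × E3, f w) = M) (hδ : 0 < δ)
    (hconc : δ ≤ ∫ x in Metric.closedBall (e3 a1 a2 z) R, rho f x) :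
    Real.sqrt (a1^2 + a2^2) *
        Real.sin (π / ((Nat.floor (M/δ) + 1 : ℕ) : ℝ)) ≤ R := by
  by_contra! hspread
  set N : ℕ := Nat.floor (M / δ) + 1
  have hρint : Integrable (rho f) := hf.integral_prod_left
  have hρ0 : 0 ≤ᵐ[volume] rho f := ae_of_all _ fun x => integral_nonneg fun v => hnn (x, v)
  have hρM : ∫ x, rho f x = M := hmass ▸ (integral_prod f hf).symm
  have hballs : ∀ k ∈ Finset.range N,
      δ ≤ ∫ x in Metric.closedBall (rotZ (2 * π * k / N) (e3 a1 a2 z)) R, rho f x := by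
    intro k _
    rwa [← coe_rotZEquiv, (rotZEquiv _).setIntegral_closedBall_apply (rho_rotZ hsym _)]
  have hNδ := card_mul_le_integral_of_pairwise_disjoint hρint hρ0
    (fun _ _ => measurableSet_closedBall) (pairwise_disjoint_closedBall_rotZ hspread) hballs
  rw [Finset.card_range, hρM] at hNδ
  have hM : M / δ < N := by exact_mod_cast Nat.lt_floor_add_one (M / δ)
  rw [div_lt_iff₀ hδ] at hM
  linarith

/-- For an axially symmetric nonnegative f of mass M concentrating mass δ in a ball
a + B_R with a = (a₁,a₂,z), the horizontal shift obeys |ā| sin(π/N) ≤ R,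
where N = ⌊M/δ⌋ + 1. -/
theorem stmt10 (f : E3 × E3 → ℝ) (M δ R a1 a2 z : ℝ)
    (hf : Integrable f) (hnn : ∀ w, 0 ≤ f w) (hsym : AxiSym f)
    (hmass : (∫ w : E3 × E3, f w) = M) (hδ : 0 < δ) (hR : 0 < R)
    (hconc : δ ≤ ∫ x in Metric.closedBall (e3 a1 a2 z) R, rho f x) :
    Real.sqrt (a1^2 + a2^2) *
        Real.sin (π / ((Nat.floor (M/δ) + 1 : ℕ) : ℝ)) ≤ R :=
  stmt10_general f M δ R a1 a2 z hf hnn hsym hmass hδ hconc
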